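/- arXiv:1404.3678 — 7 statements merged into one kernel-verified Lean document; each statement's English description precedes it below -/
import Mathlib

section
/- (Envelope Theorem) Let D ⊆ ℝᴷ be open, let f : ℝᴺ × ℝᴷ → ℝ and Cˡ : ℝᴺ × ℝᴷ → ℝ (l = 1,…,L) be continuously differentiable, let z* : D → ℝᴺ be continuously differentiable and Λ : D → ℝᴸ be continuous, and suppose for every a ∈ D: (i) Cˡ(z*(a), a) = 0 for all l, and (ii) the first-order condition ∇_z f(z*(a), a) = Σₗ Λₗ(a)·∇_z Cˡ(z*(a), a) holds. Then the value function V(a) := f(z*(a), a) is continuously differentiable on D, and for every a ∈ D and every k, ∂V/∂aₖ(a) = (∂f/∂aₖ)(z*(a), a) − Σₗ Λₗ(a)·(∂Cˡ/∂aₖ)(z*(a), a). -/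
/-!
Differentiating `V(a) = f(z*(a), a)` by the chain rule gives `V' = f_z ∘ z*' + f_a`. Differentiating
the binding constraints `Cˡ(z*(a), a) = 0`, which hold on a neighbourhood of `a`, gives
`C_zˡ ∘ z*' = -C_aˡ`. The first-order condition `f_z = ∑ₗ Λₗ C_zˡ` then turns the indirect effect
`f_z ∘ z*'` into `-∑ₗ Λₗ C_aˡ`.
-/

open Filter Topology ContinuousLinearMap

variable {E F G : Type*} [NormedAddCommGroup E] [NormedSpace ℝ E]
  [NormedAddCommGroup F] [NormedSpace ℝ F] [NormedAddCommGroup G] [NormedSpace ℝ G]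

theorem fderiv_comp_prodMk_eq_add_partials {g : E × F → G} {z : F → E} {a : F}
    (hg : DifferentiableAt ℝ g (z a, a)) (hz : DifferentiableAt ℝ z a) :
    fderiv ℝ (fun a' => g (z a', a')) a
      = (fderiv ℝ (fun y => g (y, a)) (z a)).comp (fderiv ℝ z a)
        + fderiv ℝ (fun b => g (z a, b)) a := by
  have h_fst : fderiv ℝ (fun y => g (y, a)) (z a) = (fderiv ℝ g (z a, a)).comp (inl ℝ E F) :=
    (hg.hasFDerivAt.comp (z a) (hasFDerivAt_prodMk_left (z a) a)).fderiv
  have h_snd : fderiv ℝ (fun b => g (z a, b)) a = (fderiv ℝ g (z a, a)).comp (inr ℝ E F) :=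
    (hg.hasFDerivAt.comp a (hasFDerivAt_prodMk_right (z a) a)).fderiv
  have htotal : HasFDerivAt (fun a' => g (z a', a'))
      ((fderiv ℝ g (z a, a)).comp ((fderiv ℝ z a).prod (ContinuousLinearMap.id ℝ F))) a :=
    hg.hasFDerivAt.comp (f := fun a' => (z a', a')) a (hz.hasFDerivAt.prodMk (hasFDerivAt_id a))
  rw [htotal.fderiv, h_fst, h_snd]
  ext v
  simp only [comp_apply, prod_apply, id_apply, add_apply, inl_apply, inr_apply, ← map_add,
    Prod.mk_add_mk, add_zero, zero_add]

theorem fderiv_partial_comp_eq_neg_of_eventually_eq_zero {g : E × F → ℝ} {z : F → E} {a : F}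
    (hg : DifferentiableAt ℝ g (z a, a)) (hz : DifferentiableAt ℝ z a)
    (hzero : ∀ᶠ a' in 𝓝 a, g (z a', a') = 0) :
    (fderiv ℝ (fun y => g (y, a)) (z a)).comp (fderiv ℝ z a)
      = -fderiv ℝ (fun b => g (z a, b)) a := by
  have htotal : fderiv ℝ (fun a' => g (z a', a')) a = 0 := by
    have hconst : (fun a' => g (z a', a')) =ᶠ[𝓝 a] fun _ => 0 := hzero
    rw [hconst.fderiv_eq]
    exact fderiv_const_apply 0
  rw [fderiv_comp_prodMk_eq_add_partials hg hz] at htotal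
  exact eq_neg_of_add_eq_zero_left htotal

theorem fderiv_value_eq_fderiv_lagrangian {ι : Type*} [Fintype ι] {f : E × F → ℝ}
    {C : ι → E × F → ℝ} {z : F → E} {Λ : ι → ℝ} {a : F}
    (hf : DifferentiableAt ℝ f (z a, a)) (hC : ∀ l, DifferentiableAt ℝ (C l) (z a, a))
    (hz : DifferentiableAt ℝ z a) (hbind : ∀ l, ∀ᶠ a' in 𝓝 a, C l (z a', a') = 0)
    (hFOC : fderiv ℝ (fun y => f (y, a)) (z a)
      = ∑ l, Λ l • fderiv ℝ (fun y => C l (y, a)) (z a)) :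
    fderiv ℝ (fun a' => f (z a', a')) a
      = fderiv ℝ (fun b => f (z a, b)) a - ∑ l, Λ l • fderiv ℝ (fun b => C l (z a, b)) a := by
  have hindirect : (fderiv ℝ (fun y => f (y, a)) (z a)).comp (fderiv ℝ z a)
      = -∑ l, Λ l • fderiv ℝ (fun b => C l (z a, b)) a := by
    rw [hFOC, finsetSum_comp, ← Finset.sum_neg_distrib]
    refine Finset.sum_congr rfl fun l _ => ?_
    rw [smul_comp, fderiv_partial_comp_eq_neg_of_eventually_eq_zero (hC l) hz (hbind l), smul_neg]
  rw [fderiv_comp_prodMk_eq_add_partials hf hz, hindirect, neg_add_eq_sub]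

theorem stmt_1_general (N K L : ℕ) (D : Set (Fin K → ℝ)) (hD : IsOpen D)
    (f : (Fin N → ℝ) × (Fin K → ℝ) → ℝ) (hf : ContDiff ℝ 1 f)
    (C : Fin L → (Fin N → ℝ) × (Fin K → ℝ) → ℝ) (hC : ∀ l, ContDiff ℝ 1 (C l))
    (zstar : (Fin K → ℝ) → (Fin N → ℝ)) (hz : ContDiffOn ℝ 1 zstar D)
    (Λ : (Fin K → ℝ) → (Fin L → ℝ))
    (hbind : ∀ a ∈ D, ∀ l, C l (zstar a, a) = 0)
    (hFOC : ∀ a ∈ D, fderiv ℝ (fun z => f (z, a)) (zstar a)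
       = ∑ l, Λ a l • fderiv ℝ (fun z => C l (z, a)) (zstar a)) :
    ContDiffOn ℝ 1 (fun a => f (zstar a, a)) D ∧
    ∀ a ∈ D, ∀ k : Fin K,
      fderiv ℝ (fun a' => f (zstar a', a')) a (Pi.single k 1)
        = fderiv ℝ (fun b => f (zstar a, b)) a (Pi.single k 1)
          - ∑ l, Λ a l * fderiv ℝ (fun b => C l (zstar a, b)) a (Pi.single k 1) := by
  refine ⟨hf.comp_contDiffOn (hz.prodMk contDiffOn_id), fun a ha k => ?_⟩
  have hD_nhds : D ∈ 𝓝 a := hD.mem_nhds ha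
  have henvelope := fderiv_value_eq_fderiv_lagrangian (Λ := Λ a)
    (hf.differentiable one_ne_zero _) (fun l => (hC l).differentiable one_ne_zero _)
    ((hz.contDiffAt hD_nhds).differentiableAt one_ne_zero)
    (fun l => eventually_of_mem hD_nhds fun a' ha' => hbind a' ha' l) (hFOC a ha)
  rw [henvelope]
  simp only [sub_apply, sum_apply, smul_apply, smul_eq_mul]

/-- Envelope Theorem: if `z*(a)` is a C¹ family of points satisfying the binding
constraints `C l (z*(a), a) = 0` and the Lagrangian stationarity condition in `z` with continuous
multipliers `Λ(a)`, then the value function `V(a) = f(z*(a), a)` is C¹ on `D` and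
`∂V/∂aₖ = ∂f/∂aₖ - ∑ l Λ_l(a) ∂Cˡ/∂aₖ`, all partial derivatives in `a` being evaluated at
`(z*(a), a)`. -/
theorem stmt_1 (N K L : ℕ) (D : Set (Fin K → ℝ)) (hD : IsOpen D)
    (f : (Fin N → ℝ) × (Fin K → ℝ) → ℝ) (hf : ContDiff ℝ 1 f)
    (C : Fin L → (Fin N → ℝ) × (Fin K → ℝ) → ℝ) (hC : ∀ l, ContDiff ℝ 1 (C l))
    (zstar : (Fin K → ℝ) → (Fin N → ℝ)) (hz : ContDiffOn ℝ 1 zstar D)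
    (Λ : (Fin K → ℝ) → (Fin L → ℝ)) (hΛ : ContinuousOn Λ D)
    (hbind : ∀ a ∈ D, ∀ l, C l (zstar a, a) = 0)
    (hFOC : ∀ a ∈ D, fderiv ℝ (fun z => f (z, a)) (zstar a)
       = ∑ l, Λ a l • fderiv ℝ (fun z => C l (z, a)) (zstar a)) :
    ContDiffOn ℝ 1 (fun a => f (zstar a, a)) D ∧
    ∀ a ∈ D, ∀ k : Fin K,
      fderiv ℝ (fun a' => f (zstar a', a')) a (Pi.single k 1)
        = fderiv ℝ (fun b => f (zstar a, b)) a (Pi.single k 1)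
          - ∑ l, Λ a l * fderiv ℝ (fun b => C l (zstar a, b)) a (Pi.single k 1) :=
  stmt_1_general N K L D hD f hf C hC zstar hz Λ hbind hFOC
end

section
/- (Symmetry of the multiplier response matrix, eq. (21)) Let D ⊆ ℝᴹ be open, let F : ℝⁿ → ℝ and c : ℝⁿ → ℝᴹ be continuously differentiable, let v* : D → ℝⁿ be continuously differentiable with c(v*(x)) = x for all x ∈ D, and let Λ : D → ℝᴹ be continuously differentiable and satisfy ∇F(v*(x)) = Σₘ Λₘ(x)·∇cᵐ(v*(x)) for all x ∈ D. Then for all x ∈ D and all indices i, j: ∂Λᵢ/∂xʲ(x) = ∂Λⱼ/∂xⁱ(x); i.e., the matrix ∂Λᵢ/∂xʲ is symmetric. -/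
/-!
The value function `G = F ∘ v*` has gradient `Λ` on `D`: differentiating the constraint
`c (v* x) = x` shows `Dc · Dv* = id`, so the first-order condition gives
`D(F ∘ v*) = Σₘ Λₘ · Dcᵐ · Dv* = Σₘ Λₘ · dxᵐ` (the envelope theorem). Hence `∂Λᵢ/∂xʲ` is the
Hessian of `G`, which is symmetric as soon as the gradient `Λ` is differentiable.
-/

open Filter Topology ContinuousLinearMap

section

variable {𝕜 : Type*} [NontriviallyNormedField 𝕜] {ι : Type*} [Fintype ι]

theorem hasFDerivAt_comp_of_lagrange_condition {E : Type*} [NormedAddCommGroup E]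
    [NormedSpace 𝕜 E]
    {F : E → 𝕜} {c : E → ι → 𝕜} {v : (ι → 𝕜) → E} {μ : ι → 𝕜} {x : ι → 𝕜}
    (hF : DifferentiableAt 𝕜 F (v x)) (hc : DifferentiableAt 𝕜 c (v x))
    (hv : DifferentiableAt 𝕜 v x) (hcv : (fun y => c (v y)) =ᶠ[𝓝 x] fun y => y)
    (hFOC : fderiv 𝕜 F (v x) = ∑ m, μ m • fderiv 𝕜 (fun w => c w m) (v x)) :
    HasFDerivAt (fun y => F (v y)) (∑ m, μ m • (proj m : (ι → 𝕜) →L[𝕜] 𝕜)) x := by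
  have hid : (fderiv 𝕜 c (v x)).comp (fderiv 𝕜 v x) = ContinuousLinearMap.id 𝕜 (ι → 𝕜) := by
    rw [← (hc.hasFDerivAt.comp x hv.hasFDerivAt).fderiv]
    exact hcv.fderiv_eq.trans fderiv_fun_id
  refine (hF.hasFDerivAt.comp x hv.hasFDerivAt).congr_fderiv ?_
  simp only [hFOC, fderiv_apply hc, finsetSum_comp, smul_comp, comp_assoc, hid, comp_id]

theorem fderiv_apply_single_comm_of_hasFDerivAt [IsRCLikeNormedField 𝕜] [DecidableEq ι]
    {f : (ι → 𝕜) → 𝕜} {g : (ι → 𝕜) → ι → 𝕜} {x : ι → 𝕜}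
    (hf : ∀ᶠ y in 𝓝 x, HasFDerivAt f (∑ m, g y m • (proj m : (ι → 𝕜) →L[𝕜] 𝕜)) y)
    (hg : DifferentiableAt 𝕜 g x) (i j : ι) :
    fderiv 𝕜 (fun y => g y i) x (Pi.single j 1)
      = fderiv 𝕜 (fun y => g y j) x (Pi.single i 1) := by
  have hg' : HasFDerivAt (fun y => ∑ m, g y m • (proj m : (ι → 𝕜) →L[𝕜] 𝕜))
      (∑ m, (fderiv 𝕜 (fun y => g y m) x).smulRight (proj m : (ι → 𝕜) →L[𝕜] 𝕜)) x :=
    HasFDerivAt.fun_sum fun m _ =>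
      (differentiableAt_pi.1 hg m).hasFDerivAt.smul_const (proj m : (ι → 𝕜) →L[𝕜] 𝕜)
  simpa [Pi.single_apply] using
    second_derivative_symmetric_of_eventually hf hg' (Pi.single j 1) (Pi.single i 1)

end

/-- Symmetry of the multiplier response matrix, eq. (21): in the setting of
`max F(v)` s.t. `c(v) = x`, if moreover the multipliers `Λ` are continuously differentiable
on `D`, then the multiplier response matrix is symmetric: `∂Λᵢ/∂xʲ = ∂Λⱼ/∂xⁱ` on `D`. -/
theorem stmt_5 (n M : ℕ) (D : Set (Fin M → ℝ)) (hD : IsOpen D)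
    (F : (Fin n → ℝ) → ℝ) (hF : ContDiff ℝ 1 F)
    (c : (Fin n → ℝ) → (Fin M → ℝ)) (hc : ContDiff ℝ 1 c)
    (vstar : (Fin M → ℝ) → (Fin n → ℝ)) (hv : ContDiffOn ℝ 1 vstar D)
    (Λ : (Fin M → ℝ) → (Fin M → ℝ)) (hΛ : ContDiffOn ℝ 1 Λ D)
    (hcon : ∀ x ∈ D, c (vstar x) = x)
    (hFOC : ∀ x ∈ D, fderiv ℝ F (vstar x)
        = ∑ m, Λ x m • fderiv ℝ (fun v => c v m) (vstar x)) :
    ∀ x ∈ D, ∀ i j : Fin M,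
      fderiv ℝ (fun y => Λ y i) x (Pi.single j 1)
        = fderiv ℝ (fun y => Λ y j) x (Pi.single i 1) := by
  intro x hx i j
  have hValue : ∀ y ∈ D,
      HasFDerivAt (fun z => F (vstar z)) (∑ m, Λ y m • proj m) y :=
    fun y hy => hasFDerivAt_comp_of_lagrange_condition
      (hF.differentiable one_ne_zero _) (hc.differentiable one_ne_zero _)
      ((hv.contDiffAt (hD.mem_nhds hy)).differentiableAt one_ne_zero)
      (eventually_of_mem (hD.mem_nhds hy) hcon) (hFOC y hy)
  exact fderiv_apply_single_comm_of_hasFDerivAt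
    (eventually_of_mem (hD.mem_nhds hx) hValue)
    ((hΛ.contDiffAt (hD.mem_nhds hx)).differentiableAt one_ne_zero) i j
end

section
/- (Multiplier response via the Lagrangian Hessian, eqs. (23)-(24)) Let D ⊆ ℝᴹ be open, let F : ℝⁿ → ℝ and c : ℝⁿ → ℝᴹ be twice continuously differentiable, let v* : D → ℝⁿ and Λ : D → ℝᴹ be continuously differentiable with c(v*(x)) = x and ∇F(v*(x)) = Σₘ Λₘ(x)·∇cᵐ(v*(x)) for all x ∈ D. Then for all x ∈ D and all i, j: ∂Λᵢ/∂xʲ(x) = Σₛ Σₖ (∂v*ˢ/∂xⁱ)(x) · [∂²F/∂vˢ∂vᵏ(v*(x)) − Σₘ Λₘ(x)·∂²cᵐ/∂vˢ∂vᵏ(v*(x))] · (∂v*ᵏ/∂xʲ)(x). -/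
/-!
Differentiate the two defining identities along `x`. From `c (v* x) = x` one gets
`Dc(v*) ∘ Dv* = id`. Differentiating the first-order condition `∇F(v*) = ∑ₘ Λₘ ∇cᵐ(v*)` in the
direction `eⱼ` and pairing with `Dv* eᵢ` gives
`H (Dv* eⱼ) (Dv* eᵢ) = ∑ₘ ∂ⱼΛₘ · ⟨∇cᵐ(v*), Dv* eᵢ⟩ = ∂ⱼΛᵢ`, where `H` is the Hessian of the
Lagrangian. Symmetry of second derivatives and expansion of `H` in the standard basis give the
formula.
-/

open ContinuousLinearMap Filter Topology

theorem ContinuousLinearMap.apply_apply_eq_sum_single {𝕜 ι κ : Type*} [NontriviallyNormedField 𝕜]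
    [Fintype ι] [DecidableEq ι] [Fintype κ] [DecidableEq κ]
    (T : (ι → 𝕜) →L[𝕜] (κ → 𝕜) →L[𝕜] 𝕜) (a : ι → 𝕜) (b : κ → 𝕜) :
    T a b = ∑ s, ∑ k, a s * T (Pi.single s 1) (Pi.single k 1) * b k := by
  conv_lhs => rw [pi_eq_sum_univ' a, pi_eq_sum_univ' b]
  simp only [map_sum, map_smul, sum_apply, smul_apply, smul_eq_mul, Finset.mul_sum]
  rw [Finset.sum_comm]
  exact Finset.sum_congr rfl fun s _ => Finset.sum_congr rfl fun k _ => by ring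

section LagrangeMultiplier

variable {𝕜 E X Y ι : Type*} [NontriviallyNormedField 𝕜] [NormedAddCommGroup E]
  [NormedSpace 𝕜 E] [NormedAddCommGroup X] [NormedSpace 𝕜 X] [NormedAddCommGroup Y]
  [NormedSpace 𝕜 Y] [Fintype ι]

theorem fderiv_clm_apply_const {f : E → X →L[𝕜] Y} {x : E} (hf : DifferentiableAt 𝕜 f x)
    (u : E) (w : X) : fderiv 𝕜 (fun y => f y w) x u = fderiv 𝕜 f x u w := by
  simp [fderiv_clm_apply hf (differentiableAt_const w)]

theorem fderiv_fderiv_apply_apply {c : E → ι → 𝕜} {x : E} (hc : Differentiable 𝕜 c)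
    (hc' : DifferentiableAt 𝕜 (fderiv 𝕜 c) x) (m : ι) (u w : E) :
    fderiv 𝕜 (fun y => fderiv 𝕜 (fun z => c z m) y w) x u = fderiv 𝕜 (fderiv 𝕜 c) x u w m := by
  simp only [fderiv_apply (hc _) m]
  change fderiv 𝕜 (fun y => fderiv 𝕜 c y w m) x u = _
  rw [fderiv_apply (hc'.clm_apply (differentiableAt_const w)) m, comp_apply, proj_apply,
    fderiv_clm_apply_const hc']

theorem fderiv_comp_fderiv_eq_id {c : E → X} {v : X → E} {x : X} (hc : DifferentiableAt 𝕜 c (v x))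
    (hv : DifferentiableAt 𝕜 v x) (hcv : ∀ᶠ y in 𝓝 x, c (v y) = y) :
    (fderiv 𝕜 c (v x)).comp (fderiv 𝕜 v x) = ContinuousLinearMap.id 𝕜 X :=
  (hc.hasFDerivAt.comp x hv.hasFDerivAt).unique ((hasFDerivAt_id x).congr_of_eventuallyEq hcv)

/-- The Hessian `F'' - ∑ₘ μₘ cᵐ''` of the Lagrangian `F - ∑ₘ μₘ (cᵐ - xᵐ)`. -/
noncomputable def lagrangianHessian (F'' : E →L[𝕜] E →L[𝕜] 𝕜) (c'' : E →L[𝕜] E →L[𝕜] ι → 𝕜)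
    (μ : ι → 𝕜) : E →L[𝕜] E →L[𝕜] 𝕜 :=
  F'' - ∑ m, μ m • (compL 𝕜 E (ι → 𝕜) 𝕜 (proj m)).comp c''

@[simp]
theorem lagrangianHessian_apply (F'' : E →L[𝕜] E →L[𝕜] 𝕜) (c'' : E →L[𝕜] E →L[𝕜] ι → 𝕜)
    (μ : ι → 𝕜) (u w : E) :
    lagrangianHessian F'' c'' μ u w = F'' u w - ∑ m, μ m * c'' u w m := by
  simp [lagrangianHessian]

theorem lagrangianHessian_comm {F'' : E →L[𝕜] E →L[𝕜] 𝕜} {c'' : E →L[𝕜] E →L[𝕜] ι → 𝕜}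
    (hF : ∀ u w, F'' u w = F'' w u) (hc : ∀ u w, c'' u w = c'' w u) (μ : ι → 𝕜) (u w : E) :
    lagrangianHessian F'' c'' μ u w = lagrangianHessian F'' c'' μ w u := by
  simp [hF u w, hc u w]

theorem fderiv_multiplier_apply_eq_lagrangianHessian [DecidableEq ι]
    {F : E → 𝕜} {c : E → ι → 𝕜} {v : (ι → 𝕜) → E} {Λ : (ι → 𝕜) → ι → 𝕜} {x : ι → 𝕜}
    (hF : DifferentiableAt 𝕜 (fderiv 𝕜 F) (v x)) (hc : Differentiable 𝕜 c)
    (hc' : DifferentiableAt 𝕜 (fderiv 𝕜 c) (v x))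
    (hv : DifferentiableAt 𝕜 v x) (hΛ : DifferentiableAt 𝕜 Λ x)
    (hcv : ∀ᶠ y in 𝓝 x, c (v y) = y)
    (hFOC : ∀ᶠ y in 𝓝 x, fderiv 𝕜 F (v y) = ∑ m, Λ y m • fderiv 𝕜 (fun v => c v m) (v y))
    (u : ι → 𝕜) (i : ι) :
    fderiv 𝕜 Λ x u i = lagrangianHessian (fderiv 𝕜 (fderiv 𝕜 F) (v x))
      (fderiv 𝕜 (fderiv 𝕜 c) (v x)) (Λ x) (fderiv 𝕜 v x u) (fderiv 𝕜 v x (Pi.single i 1)) := by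
  have hFOC' : fderiv 𝕜 F ∘ v =ᶠ[𝓝 x]
      fun y => ∑ m, Λ y m • (proj m).comp (fderiv 𝕜 c (v y)) := by
    filter_upwards [hFOC] with y hy
    simpa only [Function.comp_apply, fderiv_apply (hc _)] using hy
  have hlhs := hF.hasFDerivAt.comp x hv.hasFDerivAt
  have hrhs : HasFDerivAt (fun y => ∑ m, Λ y m • (proj m).comp (fderiv 𝕜 c (v y))) _ x :=
    HasFDerivAt.fun_sum fun m _ => ((hasFDerivAt_apply m (Λ x)).comp x hΛ.hasFDerivAt).smul
      ((compL 𝕜 E (ι → 𝕜) 𝕜 (proj m)).hasFDerivAt.comp x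
        (hc'.hasFDerivAt.comp x hv.hasFDerivAt))
  have hderiv := congr($(hlhs.unique (hrhs.congr_of_eventuallyEq hFOC')) u
    (fderiv 𝕜 v x (Pi.single i 1)))
  have hid := congr($(fderiv_comp_fderiv_eq_id (hc _) hv hcv) (Pi.single i 1))
  simp only [comp_apply, Function.comp_apply, compL_apply, sum_apply, add_apply, smul_apply,
    smulRight_apply, proj_apply, smul_eq_mul, id_apply] at hderiv hid
  simp [hderiv, hid, Finset.sum_add_distrib, Pi.single_apply]

end LagrangeMultiplier

/-- Multiplier response via the Lagrangian Hessian, eqs. (23)-(24): in the setting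
`max F(v)` s.t. `c(v) = x`, for `x ∈ D` and indices `i, j`:
`∂Λᵢ/∂xʲ(x) = ∑ s ∑ k (∂v*ˢ/∂xⁱ) [∂²F/∂vˢ∂vᵏ - ∑ m Λ_m ∂²cᵐ/∂vˢ∂vᵏ] (∂v*ᵏ/∂xʲ)`,
the bracket being the Hessian in `v` of the Lagrangian evaluated at `v*(x)`. -/
theorem stmt_7 (n M : ℕ) (D : Set (Fin M → ℝ)) (hD : IsOpen D)
    (F : (Fin n → ℝ) → ℝ) (hF : ContDiff ℝ 2 F)
    (c : (Fin n → ℝ) → (Fin M → ℝ)) (hc : ContDiff ℝ 2 c)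
    (vstar : (Fin M → ℝ) → (Fin n → ℝ)) (hv : ContDiffOn ℝ 1 vstar D)
    (Λ : (Fin M → ℝ) → (Fin M → ℝ)) (hΛ : ContDiffOn ℝ 1 Λ D)
    (hcon : ∀ x ∈ D, c (vstar x) = x)
    (hFOC : ∀ x ∈ D, fderiv ℝ F (vstar x)
        = ∑ m, Λ x m • fderiv ℝ (fun v => c v m) (vstar x)) :
    ∀ x ∈ D, ∀ i j : Fin M,
      fderiv ℝ (fun y => Λ y i) x (Pi.single j 1)
        = ∑ s, ∑ k,
            (fderiv ℝ vstar x (Pi.single i 1) s) *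
            ((fderiv ℝ (fun v => fderiv ℝ F v (Pi.single k 1)) (vstar x) (Pi.single s 1))
              - ∑ m, Λ x m *
                  fderiv ℝ (fun v => fderiv ℝ (fun u => c u m) v (Pi.single k 1)) (vstar x)
                    (Pi.single s 1)) *
            (fderiv ℝ vstar x (Pi.single j 1) k) := by
  intro x hx i j
  have hxD : D ∈ 𝓝 x := hD.mem_nhds hx
  have hc₁ : Differentiable ℝ c := hc.differentiable (by norm_num)
  have hF₂ : Differentiable ℝ (fderiv ℝ F) :=
    (hF.fderiv_right (m := 1) le_rfl).differentiable one_ne_zero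
  have hc₂ : Differentiable ℝ (fderiv ℝ c) :=
    (hc.fderiv_right (m := 1) le_rfl).differentiable one_ne_zero
  have hΛx : DifferentiableAt ℝ Λ x := (hΛ.contDiffAt hxD).differentiableAt one_ne_zero
  have hvx : DifferentiableAt ℝ vstar x := (hv.contDiffAt hxD).differentiableAt one_ne_zero
  rw [fderiv_apply hΛx i, comp_apply, proj_apply,
    fderiv_multiplier_apply_eq_lagrangianHessian (hF₂ _) hc₁ (hc₂ _) hvx hΛx
      (eventually_of_mem hxD hcon) (eventually_of_mem hxD hFOC),
    lagrangianHessian_comm (hF.contDiffAt.isSymmSndFDerivAt (by simp))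
      (hc.contDiffAt.isSymmSndFDerivAt (by simp)),
    apply_apply_eq_sum_single]
  simp only [lagrangianHessian_apply, fderiv_clm_apply_const (hF₂ _),
    fderiv_fderiv_apply_apply hc₁ (hc₂ _)]
end

section
/- (Negative semi-definiteness of the multiplier response matrix) Let D ⊆ ℝᴹ be open, let F : ℝⁿ → ℝ and c : ℝⁿ → ℝᴹ be twice continuously differentiable, let v* : D → ℝⁿ and Λ : D → ℝᴹ be continuously differentiable with c(v*(x)) = x and ∇F(v*(x)) = Σₘ Λₘ(x)·∇cᵐ(v*(x)) for all x ∈ D. Fix x ∈ D and suppose the n×n matrix Hess F(v*(x)) − Σₘ Λₘ(x)·Hess cᵐ(v*(x)) is negative semidefinite. Then the M×M matrix J with entries Jᵢⱼ = ∂Λᵢ/∂xʲ(x) is negative semidefinite: ρᵀJρ ≤ 0 for all ρ ∈ ℝᴹ. -/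
/-!
Differentiate the two identities `c (v* y) = y` and `∇F (v* y) = ∑ₘ Λₘ(y) ∇cᵐ (v* y)` at `x` in the
direction `ρ`, and pair the second with `w = Dv*(x) ρ`. The first says `Dcᵐ(v* x) w = ρₘ`, so the
second becomes `Hess L (w, w) = ∑ₘ (DΛₘ(x) ρ) ρₘ = ρᵀ J ρ`, where `L = F - ∑ₘ Λₘ(x) cᵐ` is the
Lagrangian. Hence `ρᵀ J ρ` is a value of the negative semidefinite Hessian of `L`.
-/

open Filter Topology

namespace ContinuousLinearMap

variable {𝕜 ι : Type*} [NontriviallyNormedField 𝕜] [Fintype ι] [DecidableEq ι]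

theorem sum_apply_single_mul (T : (ι → 𝕜) →L[𝕜] 𝕜) (w : ι → 𝕜) :
    ∑ j, T (Pi.single j 1) * w j = T w := by
  conv_rhs => rw [← Finset.univ_sum_single w]
  simp only [map_sum]
  refine Finset.sum_congr rfl fun j _ => ?_
  rw [mul_comm, ← smul_eq_mul, ← map_smul, ← Pi.single_smul', smul_eq_mul, mul_one]

theorem sum_sum_mul_apply_single_mul (B : (ι → 𝕜) →L[𝕜] (ι → 𝕜) →L[𝕜] 𝕜) (w u : ι → 𝕜) :
    ∑ s, ∑ k, w s * B (Pi.single s 1) (Pi.single k 1) * u k = B w u := by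
  simp only [mul_assoc, ← Finset.mul_sum, sum_apply_single_mul]
  simpa only [flip_apply, mul_comm] using sum_apply_single_mul (B.flip u) w

end ContinuousLinearMap

section Calculus

variable {E F G : Type*} [NormedAddCommGroup E] [NormedSpace ℝ E] [NormedAddCommGroup F]
  [NormedSpace ℝ F] [NormedAddCommGroup G] [NormedSpace ℝ G]

theorem fderiv_comp_fderiv_of_eventuallyEq {f : E → F} {v : G → E} {g : G → F} {x : G}
    (hf : DifferentiableAt ℝ f (v x)) (hv : DifferentiableAt ℝ v x)
    (h : (fun y => f (v y)) =ᶠ[𝓝 x] g) :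
    (fderiv ℝ f (v x)).comp (fderiv ℝ v x) = fderiv ℝ g x := by
  rw [← h.fderiv_eq, ← fderiv_comp x hf hv]
  rfl

theorem fderiv_fderiv_apply_const {f : E → F} {p : E} (hf : DifferentiableAt ℝ (fderiv ℝ f) p)
    (u e : E) : fderiv ℝ (fun q => fderiv ℝ f q u) p e = fderiv ℝ (fderiv ℝ f) p e u := by
  rw [fderiv_clm_apply hf (differentiableAt_const u)]
  simp

variable {ι : Type*} [Fintype ι]

theorem fderiv_fderiv_comp_apply_of_eventually_fderiv_eq_sum {f : E → ℝ} {c : ι → E → ℝ}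
    {v : G → E} {Λ : G → ι → ℝ} {x : G}
    (hf : DifferentiableAt ℝ (fderiv ℝ f) (v x))
    (hc : ∀ m, DifferentiableAt ℝ (fderiv ℝ (c m)) (v x))
    (hv : DifferentiableAt ℝ v x) (hΛ : ∀ m, DifferentiableAt ℝ (fun y => Λ y m) x)
    (hfoc : ∀ᶠ y in 𝓝 x, fderiv ℝ f (v y) = ∑ m, Λ y m • fderiv ℝ (c m) (v y)) (ρ : G) (w : E) :
    fderiv ℝ (fderiv ℝ f) (v x) (fderiv ℝ v x ρ) w
      = ∑ m, (Λ x m * fderiv ℝ (fderiv ℝ (c m)) (v x) (fderiv ℝ v x ρ) w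
          + fderiv ℝ (fun y => Λ y m) x ρ * fderiv ℝ (c m) (v x) w) := by
  have hrhs : HasFDerivAt (fun y => ∑ m, Λ y m • fderiv ℝ (c m) (v y))
      (∑ m, (Λ x m • (fderiv ℝ (fderiv ℝ (c m)) (v x)).comp (fderiv ℝ v x)
        + (fderiv ℝ (fun y => Λ y m) x).smulRight (fderiv ℝ (c m) (v x)))) x :=
    HasFDerivAt.fun_sum fun m _ =>
      (hΛ m).hasFDerivAt.smul ((hc m).hasFDerivAt.comp x hv.hasFDerivAt)
  have h := congrArg (fun T => T ρ w)
    ((fderiv_comp_fderiv_of_eventuallyEq hf hv hfoc).trans hrhs.fderiv)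
  simpa [mul_comm] using h

theorem lagrangian_hessian_apply_fderiv_eq_sum {f : E → ℝ} {c : E → ι → ℝ} {v : (ι → ℝ) → E}
    {Λ : (ι → ℝ) → ι → ℝ} {x : ι → ℝ}
    (hf : DifferentiableAt ℝ (fderiv ℝ f) (v x)) (hc : DifferentiableAt ℝ c (v x))
    (hc' : ∀ m, DifferentiableAt ℝ (fderiv ℝ fun q => c q m) (v x))
    (hv : DifferentiableAt ℝ v x) (hΛ : ∀ m, DifferentiableAt ℝ (fun y => Λ y m) x)
    (hcon : ∀ᶠ y in 𝓝 x, c (v y) = y)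
    (hfoc : ∀ᶠ y in 𝓝 x, fderiv ℝ f (v y) = ∑ m, Λ y m • fderiv ℝ (fun q => c q m) (v y))
    (ρ : ι → ℝ) :
    (fderiv ℝ (fderiv ℝ f) (v x) - ∑ m, Λ x m • fderiv ℝ (fderiv ℝ fun q => c q m) (v x))
        (fderiv ℝ v x ρ) (fderiv ℝ v x ρ)
      = ∑ m, fderiv ℝ (fun y => Λ y m) x ρ * ρ m := by
  have hcv : (fderiv ℝ c (v x)).comp (fderiv ℝ v x) = ContinuousLinearMap.id ℝ (ι → ℝ) :=
    (fderiv_comp_fderiv_of_eventuallyEq hc hv hcon).trans (fderiv_fun_id)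
  have hconstr : ∀ m, fderiv ℝ (fun q => c q m) (v x) (fderiv ℝ v x ρ) = ρ m := fun m => by
    rw [fderiv_apply hc m]
    exact congrFun (congrArg (fun T => T ρ) hcv) m
  rw [sub_apply, sub_apply, fderiv_fderiv_comp_apply_of_eventually_fderiv_eq_sum
    (c := fun m q => c q m) hf hc' hv hΛ hfoc]
  simp [hconstr, Finset.sum_add_distrib]

end Calculus

/-- Negative semi-definiteness of the multiplier response matrix: in the setting
`max F(v)` s.t. `c(v) = x`, fix `x ∈ D` and suppose the Hessian of the Lagrangian
`Hess F(v*(x)) - ∑ m Λ_m(x) Hess cᵐ(v*(x))` is negative semidefinite.  Then the matrix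
`J i j = ∂Λᵢ/∂xʲ(x)` is negative semidefinite: `ρᵀ J ρ ≤ 0` for all `ρ`. -/
theorem stmt_8 (n M : ℕ) (D : Set (Fin M → ℝ)) (hD : IsOpen D)
    (F : (Fin n → ℝ) → ℝ) (hF : ContDiff ℝ 2 F)
    (c : (Fin n → ℝ) → (Fin M → ℝ)) (hc : ContDiff ℝ 2 c)
    (vstar : (Fin M → ℝ) → (Fin n → ℝ)) (hv : ContDiffOn ℝ 1 vstar D)
    (Λ : (Fin M → ℝ) → (Fin M → ℝ)) (hΛ : ContDiffOn ℝ 1 Λ D)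
    (hcon : ∀ x ∈ D, c (vstar x) = x)
    (hFOC : ∀ x ∈ D, fderiv ℝ F (vstar x)
        = ∑ m, Λ x m • fderiv ℝ (fun v => c v m) (vstar x))
    (x : Fin M → ℝ) (hx : x ∈ D)
    (hnsd : ∀ w : Fin n → ℝ,
      ∑ s, ∑ k, w s *
        ((fderiv ℝ (fun v => fderiv ℝ F v (Pi.single k 1)) (vstar x) (Pi.single s 1))
          - ∑ m, Λ x m *
              fderiv ℝ (fun v => fderiv ℝ (fun u => c u m) v (Pi.single k 1)) (vstar x)
                (Pi.single s 1)) * w k ≤ 0) :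
    ∀ ρ : Fin M → ℝ,
      ∑ i, ∑ j, ρ i * fderiv ℝ (fun y => Λ y i) x (Pi.single j 1) * ρ j ≤ 0 := by
  intro ρ
  have hDx : D ∈ 𝓝 x := hD.mem_nhds hx
  have hvx : DifferentiableAt ℝ vstar x := (hv.contDiffAt hDx).differentiableAt one_ne_zero
  have hΛx : DifferentiableAt ℝ Λ x := (hΛ.contDiffAt hDx).differentiableAt one_ne_zero
  have hF' : DifferentiableAt ℝ (fderiv ℝ F) (vstar x) :=
    (hF.fderiv_right le_rfl).differentiable one_ne_zero _
  have hc' : ∀ m, DifferentiableAt ℝ (fderiv ℝ fun q => c q m) (vstar x) := fun m =>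
    ((contDiff_pi.mp hc m).fderiv_right le_rfl).differentiable one_ne_zero _
  set L := fderiv ℝ (fderiv ℝ F) (vstar x)
    - ∑ m, Λ x m • fderiv ℝ (fderiv ℝ fun q => c q m) (vstar x)
  have hL : ∀ w, L w w ≤ 0 := fun w => by
    rw [← ContinuousLinearMap.sum_sum_mul_apply_single_mul]
    simpa only [L, fderiv_fderiv_apply_const hF', fderiv_fderiv_apply_const (hc' _),
      sub_apply, sum_apply, smul_apply, smul_eq_mul] using hnsd w
  have hρ : L (fderiv ℝ vstar x ρ) (fderiv ℝ vstar x ρ)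
      = ∑ i, fderiv ℝ (fun y => Λ y i) x ρ * ρ i :=
    lagrangian_hessian_apply_fderiv_eq_sum hF' (hc.differentiable two_ne_zero _) hc' hvx
      (differentiableAt_pi.mp hΛx) (eventually_of_mem hDx hcon) (eventually_of_mem hDx hFOC) ρ
  simp only [mul_assoc, ← Finset.mul_sum, ContinuousLinearMap.sum_apply_single_mul]
  simpa only [mul_comm, hρ] using hL (fderiv ℝ vstar x ρ)
end

section
/- (Bordered Hessian criterion) Let B be a symmetric n×n real matrix and A an M×n real matrix with M ≤ n. The (n+M)×(n+M) block matrix H = [[B, Aᵀ],[A, 0]] is invertible if and only if A has rank M and the bilinear form (w, w') ↦ wᵀBw' is nondegenerate on the kernel of A (i.e., for every nonzero w ∈ ker A there exists w' ∈ ker A with wᵀBw' ≠ 0). -/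
/-!
If `H (w, μ) = 0` then `A w = 0` and `B w = -Aᵀ μ` is orthogonal to `ker A`; nondegeneracy of `B`
on `ker A` forces `w = 0`, and then `rank A = M` (injectivity of `Aᵀ`) forces `μ = 0`. Conversely,
a kernel vector `μ` of `Aᵀ` gives the kernel vector `(0, μ)` of `H`, and a `w ∈ ker A` with
`B w ⊥ ker A` has `B w = Aᵀ μ` for some `μ` (the Fredholm alternative, via the dual annihilator of
`ker A`), so that `(w, -μ)` lies in the kernel of `H`.
-/

theorem Sum.elim_eq_zero_iff {α β γ : Type*} [Zero γ] {f : α → γ} {g : β → γ} :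
    Sum.elim f g = 0 ↔ f = 0 ∧ g = 0 :=
  ⟨fun h ↦ ⟨congrArg (· ∘ Sum.inl) h, congrArg (· ∘ Sum.inr) h⟩,
    fun ⟨hf, hg⟩ ↦ hf ▸ hg ▸ Sum.elim_zero_zero⟩

namespace Matrix

variable {K m n : Type*} [Field K] [Fintype m] [Fintype n]

theorem exists_transpose_mulVec_eq_of_dotProduct_eq_zero (A : Matrix m n K) {v : n → K}
    (hv : ∀ u, A *ᵥ u = 0 → v ⬝ᵥ u = 0) :
    ∃ μ : m → K, Aᵀ *ᵥ μ = v := by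
  classical
  have hmem : dotProductEquiv K n v ∈ (LinearMap.ker A.mulVecLin).dualAnnihilator :=
    (Submodule.mem_dualAnnihilator _).2 fun u hu ↦ hv u hu
  rw [← LinearMap.range_dualMap_eq_dualAnnihilator_ker] at hmem
  obtain ⟨ψ, hψ⟩ := hmem
  obtain ⟨μ, rfl⟩ := (dotProductEquiv K m).surjective ψ
  refine ⟨μ, (dotProductEquiv K n).injective (LinearMap.ext fun u ↦ ?_)⟩
  calc (Aᵀ *ᵥ μ) ⬝ᵥ u = μ ⬝ᵥ A *ᵥ u := by rw [mulVec_transpose, dotProduct_mulVec]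
    _ = v ⬝ᵥ u := LinearMap.congr_fun hψ u

theorem rank_eq_card_iff_ker_transpose_trivial (A : Matrix m n K) :
    A.rank = Fintype.card m ↔ ∀ μ, Aᵀ *ᵥ μ = 0 → μ = 0 := by
  rw [← ker_mulVecLin_eq_bot_iff, LinearMap.ker_eq_bot, coe_mulVecLin, mulVec_injective_iff,
    col_transpose, linearIndependent_iff_card_eq_finrank_span, rank_eq_finrank_span_row,
    Set.finrank, eq_comm]

theorem fromBlocks_transpose_zero_mulVec_injective_iff (B : Matrix n n K) (A : Matrix m n K) :
    Function.Injective (fromBlocks B Aᵀ A 0).mulVec ↔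
      ∀ w μ, B *ᵥ w + Aᵀ *ᵥ μ = 0 → A *ᵥ w = 0 → w = 0 ∧ μ = 0 := by
  rw [← coe_mulVecLin, ← LinearMap.ker_eq_bot, ker_mulVecLin_eq_bot_iff]
  constructor
  · intro h w μ hBA hA
    exact Sum.elim_eq_zero_iff.1 <| h (Sum.elim w μ) (by simp [fromBlocks_mulVec, hBA, hA])
  · intro h x hx
    rw [← Sum.elim_comp_inl_inr x] at hx ⊢
    simp only [fromBlocks_mulVec, Sum.elim_comp_inl, Sum.elim_comp_inr, zero_mulVec, add_zero,
      Sum.elim_eq_zero_iff] at hx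
    exact Sum.elim_eq_zero_iff.2 (h _ _ hx.1 hx.2)

theorem IsSymm.dotProduct_mulVec_comm {B : Matrix n n K} (hB : B.IsSymm) (v w : n → K) :
    v ⬝ᵥ B *ᵥ w = (B *ᵥ v) ⬝ᵥ w := by
  rw [dotProduct_mulVec, ← mulVec_transpose, hB.eq]

theorem IsSymm.isUnit_fromBlocks_transpose_zero_iff [DecidableEq m] [DecidableEq n]
    {B : Matrix n n K} (hB : B.IsSymm) (A : Matrix m n K) :
    IsUnit (Matrix.fromBlocks B Aᵀ A 0) ↔
      A.rank = Fintype.card m ∧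
        ∀ w, A *ᵥ w = 0 → w ≠ 0 → ∃ w', A *ᵥ w' = 0 ∧ w ⬝ᵥ B *ᵥ w' ≠ 0 := by
  rw [← mulVec_injective_iff_isUnit, fromBlocks_transpose_zero_mulVec_injective_iff,
    rank_eq_card_iff_ker_transpose_trivial]
  constructor
  · intro hH
    refine ⟨fun μ hμ ↦ (hH 0 μ (by simpa using hμ) (mulVec_zero A)).2, fun w hAw hw ↦ ?_⟩
    by_contra! hBw
    obtain ⟨μ, hμ⟩ := exists_transpose_mulVec_eq_of_dotProduct_eq_zero A (v := B *ᵥ w)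
      fun u hu ↦ hB.dotProduct_mulVec_comm w u ▸ hBw u hu
    exact hw (hH w (-μ) (by rw [mulVec_neg, hμ, add_neg_cancel]) hAw).1
  · rintro ⟨hA, hBA⟩ w μ hstat hAw
    obtain rfl : w = 0 := by
      by_contra hw
      obtain ⟨w', hAw', hne⟩ := hBA w hAw hw
      apply hne
      rw [hB.dotProduct_mulVec_comm, eq_neg_of_add_eq_zero_left hstat, neg_dotProduct,
        mulVec_transpose, ← dotProduct_mulVec, hAw', dotProduct_zero, neg_zero]
    exact ⟨rfl, hA μ (by simpa using hstat)⟩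

end Matrix

open Matrix

theorem stmt_10_general (n M : ℕ)
    (B : Matrix (Fin n) (Fin n) ℝ) (hB : B.IsSymm)
    (A : Matrix (Fin M) (Fin n) ℝ) :
    IsUnit (Matrix.fromBlocks B Aᵀ A 0).det ↔
      (A.rank = M ∧
        ∀ w : Fin n → ℝ, A.mulVec w = 0 → w ≠ 0 →
          ∃ w' : Fin n → ℝ, A.mulVec w' = 0 ∧ w ⬝ᵥ B.mulVec w' ≠ 0) := by
  rw [← isUnit_iff_isUnit_det, hB.isUnit_fromBlocks_transpose_zero_iff, Fintype.card_fin]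

/-- Bordered Hessian criterion: for a symmetric `n×n` matrix `B` and an `M×n`
matrix `A` with `M ≤ n`, the bordered matrix `H = [[B, Aᵀ],[A, 0]]` is invertible iff `A` has
rank `M` and the bilinear form `(w, w') ↦ wᵀ B w'` is nondegenerate on `ker A`. -/
theorem stmt_10 (n M : ℕ) (hMn : M ≤ n)
    (B : Matrix (Fin n) (Fin n) ℝ) (hB : B.IsSymm)
    (A : Matrix (Fin M) (Fin n) ℝ) :
    IsUnit (Matrix.fromBlocks B Aᵀ A 0).det ↔
      (A.rank = M ∧
        ∀ w : Fin n → ℝ, A.mulVec w = 0 → w ≠ 0 →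
          ∃ w' : Fin n → ℝ, A.mulVec w' = 0 ∧ w ⬝ᵥ B.mulVec w' ≠ 0) :=
  stmt_10_general n M B hB A
end

section
/- (Proposition 1, symmetry part, abstract form) Let U : ℝᵖ → ℝ, G : ℝᵖ → ℝᴶ, and c : ℝᵖ → ℝᴹ be twice continuously differentiable with J + M ≤ p, and let x* ∈ ℝᴹ. Assume: (1) there are an open neighborhood ε of x* and a continuous map w* : ε → ℝᵖ such that for every x ∈ ε, w*(x) is the unique maximizer of U over the set {w ∈ ℝᵖ : G(w) = 0 and c(w) = x}; (2) the J + M gradients ∇Gʲ(w*(x*)) (j = 1,…,J) and ∇cᵐ(w*(x*)) (m = 1,…,M) are linearly independent; (3) there exist μ₀ ∈ ℝᴶ, λ₀ ∈ ℝᴹ with ∇U(w*(x*)) = Σⱼ μ₀,ⱼ∇Gʲ(w*(x*)) + Σₘ λ₀,ₘ∇cᵐ(w*(x*)); and (4) the Hessian at w*(x*) of the Lagrangian U − Σⱼ μ₀,ⱼGʲ − Σₘ λ₀,ₘcᵐ, restricted to the common kernel of the gradients in (2), is invertible. Then there exists an open neighborhood of x* on which the Lagrange multipliers λ(x) ∈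 ℝᴹ of the constraints c(w) = x are uniquely determined, continuously differentiable in x, and satisfy ∂λᵢ/∂xⱼ(x) = ∂λⱼ/∂xᵢ(x) for all i, j. -/
/-!
The KKT map `(w, a) ↦ (∇U(w) - ∑ₖ aₖ ∇gₖ(w), g(w))` of the stacked constraints `g = (G, c)` is
`C¹`, and LICQ together with the nondegeneracy of the Hessian of the Lagrangian on the tangent
space make its derivative at `(w*(x*), μ₀, λ₀)` injective, hence invertible. The inverse function
theorem yields a `C¹` branch of KKT points parametrised by the right-hand side `(0, x)`. The
multipliers of the maximiser `w*(x)` exist by the Lagrange multiplier rule, are unique by LICQ and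
depend continuously on `x`, so the continuous KKT path `(w*(x), μ(x), λ(x))` is this branch and the
multipliers are `C¹`. Finally, by the envelope theorem `λ(x)` is the gradient of the value function
`x ↦ U(w*(x))`; a differentiable gradient has a symmetric Jacobian.
-/

open Filter Topology

section LinearAlgebra

variable {E : Type*} [NormedAddCommGroup E] [NormedSpace ℝ E] {ι : Type*} [Fintype ι]

theorem LinearIndependent.continuousAt_coeffs [FiniteDimensional ℝ E] {X : Type*}
    [TopologicalSpace X] {f : X → ι → E} {y : X → E} {a : X → ι → ℝ} {x₀ : X}
    (hf : ContinuousAt f x₀) (hy : ContinuousAt y x₀) (hli : LinearIndependent ℝ (f x₀))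
    (ha : ∀ᶠ x in 𝓝 x₀, y x = ∑ k, a x k • f x k) : ContinuousAt a x₀ := by
  obtain ⟨R, hR⟩ := (Fintype.linearCombination ℝ (f x₀)).exists_leftInverse_of_injective
    (LinearMap.ker_eq_bot.2 hli.fintypeLinearCombination_injective)
  -- `A x` tends to the identity, so it is eventually invertible and `a x = (A x)⁻¹ (R (y x))`.
  set A : X → (ι → ℝ) →L[ℝ] (ι → ℝ) := fun x =>
    LinearMap.toContinuousLinearMap (R ∘ₗ Fintype.linearCombination ℝ (f x))
  have hA₀ : A x₀ = 1 := by
    ext1 v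
    exact LinearMap.congr_fun hR v
  have hR_cont := LinearMap.continuous_of_finiteDimensional R
  have hA : ContinuousAt A x₀ := by
    refine continuousAt_clm_apply.2 fun v => hR_cont.continuousAt.comp ?_
    exact tendsto_finsetSum _ fun k _ =>
      ((continuous_apply k).continuousAt.comp hf).const_smul (v k)
  have hunit : ∀ᶠ x in 𝓝 x₀, IsUnit (A x) :=
    hA.eventually_mem (Units.isOpen.mem_nhds (hA₀ ▸ isUnit_one))
  have hformula : (fun x => Ring.inverse (A x) (R (y x))) =ᶠ[𝓝 x₀] a := by
    filter_upwards [ha, hunit] with x hx hu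
    have hRy : R (y x) = A x (a x) := by rw [hx]; rfl
    rw [hRy, ← mul_apply_eq_comp, Ring.inverse_mul_cancel _ hu]
    rfl
  have hinv : ContinuousAt (fun x => Ring.inverse (A x)) x₀ :=
    ContinuousAt.comp (g := Ring.inverse)
      (by rw [hA₀, ← Units.val_one]; exact NormedRing.inverse_continuousAt 1) hA
  exact (hinv.clm_apply (hR_cont.continuousAt.comp hy)).congr hformula

theorem IsLocalExtrOn.exists_eq_sum_smul_of_linearIndependent [CompleteSpace E]
    {φ : E → ℝ} {x₀ : E} {f : ι → E → ℝ} {f' : ι → StrongDual ℝ E} {φ' : StrongDual ℝ E}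
    (hextr : IsLocalExtrOn φ {x | ∀ i, f i x = f i x₀} x₀)
    (hf' : ∀ i, HasStrictFDerivAt (f i) (f' i) x₀) (hφ' : HasStrictFDerivAt φ φ' x₀)
    (hli : LinearIndependent ℝ f') : ∃ Λ : ι → ℝ, φ' = ∑ i, Λ i • f' i := by
  obtain ⟨Λ, Λ₀, hne, hsum⟩ := hextr.exists_multipliers_of_hasStrictFDerivAt hf' hφ'
  have hΛ₀ : Λ₀ ≠ 0 := by
    rintro rfl
    refine hne (Prod.ext (funext <| Fintype.linearIndependent_iff.1 hli Λ ?_) rfl)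
    simpa using hsum
  refine ⟨-Λ₀⁻¹ • Λ, ?_⟩
  simp_rw [Pi.smul_apply, smul_eq_mul, mul_smul, ← Finset.smul_sum,
    eq_neg_of_add_eq_zero_left hsum, smul_neg, neg_smul, neg_neg, smul_smul,
    inv_mul_cancel₀ hΛ₀, one_smul]

end LinearAlgebra

section KKT

variable {E : Type*} [NormedAddCommGroup E] [NormedSpace ℝ E] {ι : Type*} [Fintype ι]

def lagrangian (U : E → ℝ) (g : ι → E → ℝ) (a : ι → ℝ) (w : E) : ℝ := U w - ∑ k, a k * g k w

noncomputable def kktMap (U : E → ℝ) (g : ι → E → ℝ) (z : E × (ι → ℝ)) :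
    StrongDual ℝ E × (ι → ℝ) :=
  (fderiv ℝ U z.1 - ∑ k, z.2 k • fderiv ℝ (g k) z.1, fun k => g k z.1)

/-- `fderiv ℝ (fun u => fderiv ℝ L u v') w₀ v` is the Hessian `D²L(w₀) v v'` of the Lagrangian. -/
def LagrangianHessianNondegenerate (U : E → ℝ) (g : ι → E → ℝ) (a₀ : ι → ℝ) (w₀ : E) : Prop :=
  ∀ v : E, (∀ k, fderiv ℝ (g k) w₀ v = 0) → v ≠ 0 →
    ∃ v' : E, (∀ k, fderiv ℝ (g k) w₀ v' = 0) ∧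
      fderiv ℝ (fun u => fderiv ℝ (lagrangian U g a₀) u v') w₀ v ≠ 0

variable {U : E → ℝ} {g : ι → E → ℝ}

theorem kktMap_eq_iff {w : E} {a y : ι → ℝ} :
    kktMap U g (w, a) = (0, y) ↔
      fderiv ℝ U w = ∑ k, a k • fderiv ℝ (g k) w ∧ ∀ k, g k w = y k := by
  simp [kktMap, Prod.ext_iff, sub_eq_zero, funext_iff]

theorem fderiv_lagrangian {a : ι → ℝ} {w : E} (hU : DifferentiableAt ℝ U w)
    (hg : ∀ k, DifferentiableAt ℝ (g k) w) :
    fderiv ℝ (lagrangian U g a) w = fderiv ℝ U w - ∑ k, a k • fderiv ℝ (g k) w :=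
  (hU.hasFDerivAt.sub (HasFDerivAt.fun_sum fun k _ => (hg k).hasFDerivAt.const_mul (a k))).fderiv

theorem hasFDerivAt_kktMap_right (w : E) (a : ι → ℝ) :
    HasFDerivAt (fun b => kktMap U g (w, b))
      (-(LinearMap.toContinuousLinearMap
        (Fintype.linearCombination ℝ fun k => fderiv ℝ (g k) w)).prod
        (0 : (ι → ℝ) →L[ℝ] (ι → ℝ))) a := by
  set Lc := LinearMap.toContinuousLinearMap
    (Fintype.linearCombination ℝ fun k => fderiv ℝ (g k) w)
  have hLc : (fun b => kktMap U g (w, b)) =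
      fun b => kktMap U g (w, 0) - Lc.prod (0 : (ι → ℝ) →L[ℝ] (ι → ℝ)) b := by
    funext b
    refine Prod.ext ?_ ?_
    · simp [kktMap, Lc, Fintype.linearCombination_apply]
    · simp [kktMap]
  rw [hLc]
  simpa using (Lc.prod (0 : (ι → ℝ) →L[ℝ] (ι → ℝ))).hasFDerivAt.const_sub (kktMap U g (w, 0))

theorem contDiff_lagrangian (hU : ContDiff ℝ 2 U) (hg : ∀ k, ContDiff ℝ 2 (g k)) (a : ι → ℝ) :
    ContDiff ℝ 2 (lagrangian U g a) := by
  unfold lagrangian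
  fun_prop

theorem contDiff_kktMap (hU : ContDiff ℝ 2 U) (hg : ∀ k, ContDiff ℝ 2 (g k)) :
    ContDiff ℝ 1 (kktMap U g) := by
  have hDU := hU.fderiv_right (m := 1) le_rfl
  have hDg := fun k => (hg k).fderiv_right (m := 1) le_rfl
  have hg1 : ∀ k, ContDiff ℝ 1 (g k) := fun k => (hg k).of_le one_le_two
  refine ContDiff.prodMk ?_ (contDiff_pi.2 fun k => (hg1 k).comp contDiff_fst)
  fun_prop

theorem hasFDerivAt_kktMap_left (hU : ContDiff ℝ 2 U) (hg : ∀ k, ContDiff ℝ 2 (g k))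
    (w : E) (a : ι → ℝ) :
    HasFDerivAt (fun v => kktMap U g (v, a))
      ((fderiv ℝ (fderiv ℝ (lagrangian U g a)) w).prod (.pi fun k => fderiv ℝ (g k) w)) w := by
  have hDL := ((contDiff_lagrangian hU hg a).fderiv_right (m := 1) le_rfl).differentiable
    one_ne_zero w
  refine (hDL.hasFDerivAt.prodMk (hasFDerivAt_pi.2 fun k =>
    ((hg k).differentiable two_ne_zero w).hasFDerivAt)).congr_of_eventuallyEq
    (Eventually.of_forall fun v => ?_)
  dsimp only
  rw [kktMap, fderiv_lagrangian (hU.differentiable two_ne_zero v)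
    fun k => (hg k).differentiable two_ne_zero v]

theorem fderiv_kktMap_apply (hU : ContDiff ℝ 2 U) (hg : ∀ k, ContDiff ℝ 2 (g k))
    (w δw : E) (a δa : ι → ℝ) :
    fderiv ℝ (kktMap U g) (w, a) (δw, δa) =
      (fderiv ℝ (fderiv ℝ (lagrangian U g a)) w δw - ∑ k, δa k • fderiv ℝ (g k) w,
        fun k => fderiv ℝ (g k) w δw) := by
  set D := fderiv ℝ (kktMap U g) (w, a)
  have hD : HasFDerivAt (kktMap U g) D (w, a) :=
    ((contDiff_kktMap hU hg).differentiable one_ne_zero _).hasFDerivAt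
  have hD_inl := hD.comp w (hasFDerivAt_prodMk_left (𝕜 := ℝ) w a)
  have hD_inr := hD.comp a (hasFDerivAt_prodMk_right (𝕜 := ℝ) w a)
  have hsplit : D (δw, δa) = D.comp (.inl ℝ E (ι → ℝ)) δw + D.comp (.inr ℝ E (ι → ℝ)) δa := by
    rw [ContinuousLinearMap.comp_apply, ContinuousLinearMap.comp_apply, ← map_add]
    simp
  rw [hsplit, hD_inl.unique (hasFDerivAt_kktMap_left hU hg w a),
    hD_inr.unique (hasFDerivAt_kktMap_right w a)]
  refine Prod.ext ?_ ?_
  · simp [Fintype.linearCombination_apply, sub_eq_add_neg]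
  · simp

theorem injective_fderiv_kktMap (hU : ContDiff ℝ 2 U) (hg : ∀ k, ContDiff ℝ 2 (g k))
    {w₀ : E} {a₀ : ι → ℝ}
    (hli : LinearIndependent ℝ fun k => fderiv ℝ (g k) w₀)
    (hker : LagrangianHessianNondegenerate U g a₀ w₀) :
    Function.Injective (fderiv ℝ (kktMap U g) (w₀, a₀)) := by
  rw [injective_iff_map_eq_zero]
  rintro ⟨δw, δa⟩ h
  rw [fderiv_kktMap_apply hU hg, Prod.mk_eq_zero, sub_eq_zero, funext_iff] at h
  obtain ⟨hstat, htan⟩ := h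
  obtain rfl : δw = 0 := by
    by_contra hδw
    obtain ⟨v', hv', hne⟩ := hker δw htan hδw
    have hDL := ((contDiff_lagrangian hU hg a₀).fderiv_right (m := 1) le_rfl).differentiable
      one_ne_zero w₀
    apply hne
    simp [fderiv_clm_apply hDL (differentiableAt_const v'), hstat, hv']
  obtain rfl : δa = 0 :=
    funext (Fintype.linearIndependent_iff.1 hli δa (by simpa using hstat.symm))
  rfl

theorem exists_localInverse_kktMap [FiniteDimensional ℝ E] (hU : ContDiff ℝ 2 U)
    (hg : ∀ k, ContDiff ℝ 2 (g k)) {w₀ : E} {a₀ y₀ : ι → ℝ}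
    (h₀ : kktMap U g (w₀, a₀) = (0, y₀)) (hli : LinearIndependent ℝ fun k => fderiv ℝ (g k) w₀)
    (hker : LagrangianHessianNondegenerate U g a₀ w₀) :
    ∃ ζ : (ι → ℝ) → E × (ι → ℝ), ContDiffAt ℝ 1 ζ y₀ ∧
      (∀ᶠ y in 𝓝 y₀, kktMap U g (ζ y) = (0, y)) ∧
      ∀ᶠ z in 𝓝 (w₀, a₀), ∀ y, kktMap U g z = (0, y) → ζ y = z := by
  have hrank : Module.finrank ℝ (E × (ι → ℝ)) =
      Module.finrank ℝ (StrongDual ℝ E × (ι → ℝ)) := by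
    rw [Module.finrank_prod, Module.finrank_prod, ← LinearMap.toContinuousLinearMap.finrank_eq,
      Subspace.dual_finrank_eq]
  let e := (LinearMap.linearEquivOfInjective (fderiv ℝ (kktMap U g) (w₀, a₀) : _ →ₗ[ℝ] _)
    (injective_fderiv_kktMap hU hg hli hker) hrank).toContinuousLinearEquiv
  have hf := (contDiff_kktMap hU hg).contDiffAt (x := (w₀, a₀))
  have he : HasFDerivAt (kktMap U g) (e : E × (ι → ℝ) →L[ℝ] _) (w₀, a₀) :=
    (hf.differentiableAt one_ne_zero).hasFDerivAt
  have hstrict := hf.hasStrictFDerivAt' he one_ne_zero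
  have hembed : ContDiff ℝ 1 fun y : ι → ℝ => ((0 : StrongDual ℝ E), y) :=
    contDiff_const.prodMk contDiff_id
  refine ⟨fun y => hf.localInverse he one_ne_zero (0, y), ?_, ?_, ?_⟩
  · exact (h₀ ▸ hf.to_localInverse he one_ne_zero).comp y₀ hembed.contDiffAt
  · exact hembed.continuous.continuousAt.eventually (h₀ ▸ hstrict.eventually_right_inverse)
  · filter_upwards [hstrict.eventually_left_inverse] with z hz y hy
    rw [← hy]
    exact hz

end KKT

theorem hasFDerivAt_envelope {E X ι : Type*} [NormedAddCommGroup E] [NormedSpace ℝ E]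
    [NormedAddCommGroup X] [NormedSpace ℝ X] [Fintype ι] {U : E → ℝ} {g : ι → E → ℝ}
    {w : X → E} {b : X → ι → ℝ} {a : ι → ℝ} {b' : ι → StrongDual ℝ X} {x : X}
    (hw : DifferentiableAt ℝ w x) (hU : DifferentiableAt ℝ U (w x))
    (hg : ∀ k, DifferentiableAt ℝ (g k) (w x))
    (hfoc : fderiv ℝ U (w x) = ∑ k, a k • fderiv ℝ (g k) (w x))
    (hfeas : ∀ᶠ x' in 𝓝 x, ∀ k, g k (w x') = b x' k)
    (hb : ∀ k, HasFDerivAt (fun x' => b x' k) (b' k) x) :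
    HasFDerivAt (fun x' => U (w x')) (∑ k, a k • b' k) x := by
  have hconstr : ∀ k, (fderiv ℝ (g k) (w x)).comp (fderiv ℝ w x) = b' k := fun k =>
    ((hg k).hasFDerivAt.comp x hw.hasFDerivAt).unique
      ((hb k).congr_of_eventuallyEq (hfeas.mono fun _ h => h k))
  have hchain := hU.hasFDerivAt.comp x hw.hasFDerivAt
  simp only [hfoc, ContinuousLinearMap.finsetSum_comp, ContinuousLinearMap.smul_comp,
    hconstr] at hchain
  exact hchain

theorem fderiv_apply_single_comm {ι : Type*} [Fintype ι] [DecidableEq ι]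
    {V : (ι → ℝ) → ℝ} {lam : (ι → ℝ) → ι → ℝ} {x : ι → ℝ}
    (hV : ∀ᶠ y in 𝓝 x,
      HasFDerivAt V (∑ m, lam y m • (ContinuousLinearMap.proj m : (ι → ℝ) →L[ℝ] ℝ)) y)
    (hlam : DifferentiableAt ℝ lam x) (i j : ι) :
    fderiv ℝ (fun y => lam y i) x (Pi.single j 1) =
      fderiv ℝ (fun y => lam y j) x (Pi.single i 1) := by
  have hlam' : HasFDerivAt (fun y => ∑ m, lam y m • ContinuousLinearMap.proj m)
      (∑ m, (fderiv ℝ (fun y => lam y m) x).smulRight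
        (ContinuousLinearMap.proj m : (ι → ℝ) →L[ℝ] ℝ)) x :=
    HasFDerivAt.fun_sum fun m _ => (differentiableAt_pi.1 hlam m).hasFDerivAt.smul_const
      (ContinuousLinearMap.proj m : (ι → ℝ) →L[ℝ] ℝ)
  simpa [Pi.single_apply] using
    second_derivative_symmetric_of_eventually hV hlam' (Pi.single j 1) (Pi.single i 1)

section Multipliers

variable {E : Type*} [NormedAddCommGroup E] [NormedSpace ℝ E] [FiniteDimensional ℝ E]
  {ι : Type*} [Fintype ι] {U : E → ℝ} {g : ι → E → ℝ}

theorem exists_continuousAt_multipliers {X : Type*} [TopologicalSpace X]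
    (hU : ContDiff ℝ 1 U) (hg : ∀ k, ContDiff ℝ 1 (g k)) {b : X → ι → ℝ} {w : X → E} {x₀ : X}
    (hw : ContinuousAt w x₀)
    (hmax : ∀ᶠ x in 𝓝 x₀,
      (∀ k, g k (w x) = b x k) ∧ IsLocalMaxOn U {v | ∀ k, g k v = b x k} (w x))
    (hli : LinearIndependent ℝ fun k => fderiv ℝ (g k) (w x₀))
    {a₀ : ι → ℝ} (hfoc : fderiv ℝ U (w x₀) = ∑ k, a₀ k • fderiv ℝ (g k) (w x₀)) :
    ∃ s : X → ι → ℝ, ContinuousAt s x₀ ∧ s x₀ = a₀ ∧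
      ∀ᶠ x in 𝓝 x₀, LinearIndependent ℝ (fun k => fderiv ℝ (g k) (w x)) ∧
        fderiv ℝ U (w x) = ∑ k, s x k • fderiv ℝ (g k) (w x) := by
  have hDg : ContinuousAt (fun x => fun k => fderiv ℝ (g k) (w x)) x₀ :=
    continuousAt_pi.2 fun k => ((hg k).continuous_fderiv one_ne_zero).continuousAt.comp hw
  have hli_ev : ∀ᶠ x in 𝓝 x₀, LinearIndependent ℝ fun k => fderiv ℝ (g k) (w x) :=
    hDg.eventually hli.eventually
  have hs_ex : ∀ᶠ x in 𝓝 x₀, ∃ s : ι → ℝ,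
      fderiv ℝ U (w x) = ∑ k, s k • fderiv ℝ (g k) (w x) := by
    filter_upwards [hmax, hli_ev] with x ⟨hfeas, hmax_x⟩ hli_x
    have hlevel : {v | ∀ k, g k v = g k (w x)} = {v | ∀ k, g k v = b x k} := by
      simp only [hfeas]
    refine IsLocalExtrOn.exists_eq_sum_smul_of_linearIndependent ?_
      (fun k => (hg k).contDiffAt.hasStrictFDerivAt one_ne_zero)
      (hU.contDiffAt.hasStrictFDerivAt one_ne_zero) hli_x
    exact hlevel ▸ hmax_x.isExtr
  obtain ⟨s, hs⟩ := hs_ex.choice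
  have hDU : ContinuousAt (fun x => fderiv ℝ U (w x)) x₀ :=
    (hU.continuous_fderiv one_ne_zero).continuousAt.comp hw
  exact ⟨s, hli.continuousAt_coeffs hDg hDU hs,
    hli.fintypeLinearCombination_injective (hs.self_of_nhds.symm.trans hfoc), hli_ev.and hs⟩

theorem exists_contDiffAt_multipliers {X : Type*} [NormedAddCommGroup X] [NormedSpace ℝ X]
    (hU : ContDiff ℝ 2 U) (hg : ∀ k, ContDiff ℝ 2 (g k))
    {b : X → ι → ℝ} (hb : ContDiff ℝ 1 b) {w : X → E} {x₀ : X} (hw : ContinuousAt w x₀)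
    (hmax : ∀ᶠ x in 𝓝 x₀,
      (∀ k, g k (w x) = b x k) ∧ IsLocalMaxOn U {v | ∀ k, g k v = b x k} (w x))
    (hli : LinearIndependent ℝ fun k => fderiv ℝ (g k) (w x₀))
    {a₀ : ι → ℝ} (hfoc : fderiv ℝ U (w x₀) = ∑ k, a₀ k • fderiv ℝ (g k) (w x₀))
    (hker : LagrangianHessianNondegenerate U g a₀ (w x₀)) :
    ∃ a : X → ι → ℝ, ∀ᶠ x in 𝓝 x₀, ContDiffAt ℝ 1 a x ∧
      LinearIndependent ℝ (fun k => fderiv ℝ (g k) (w x)) ∧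
      fderiv ℝ U (w x) = ∑ k, a x k • fderiv ℝ (g k) (w x) ∧
      HasFDerivAt (fun x => U (w x)) (∑ k, a x k • fderiv ℝ (fun x => b x k) x) x := by
  obtain ⟨s, hs_cont, hs₀, hs⟩ := exists_continuousAt_multipliers (hU.of_le one_le_two)
    (fun k => (hg k).of_le one_le_two) hw hmax hli hfoc
  obtain ⟨ζ, hζ, hζ_kkt, hζ_uniq⟩ := exists_localInverse_kktMap hU hg
    (kktMap_eq_iff.2 ⟨hfoc, hmax.self_of_nhds.1⟩) hli hker
  -- By local uniqueness of KKT points, the continuous path `(w x, s x)` is the one given by `ζ`.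
  have hζ_eq : ∀ᶠ x in 𝓝 x₀, ζ (b x) = (w x, s x) := by
    have hz : Tendsto (fun x => (w x, s x)) (𝓝 x₀) (𝓝 (w x₀, a₀)) := hs₀ ▸ hw.prodMk hs_cont
    filter_upwards [hz.eventually hζ_uniq, hs, hmax] with x hx hsx hmx
    exact hx (b x) (kktMap_eq_iff.2 ⟨hsx.2, hmx.1⟩)
  have hζb : ContDiffAt ℝ 1 (fun x => ζ (b x)) x₀ := hζ.comp x₀ hb.contDiffAt
  have hζb_kkt : ∀ᶠ x in 𝓝 x₀, kktMap U g (ζ (b x)) = (0, b x) :=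
    hb.continuous.continuousAt.eventually hζ_kkt
  refine ⟨fun x => (ζ (b x)).2, ?_⟩
  filter_upwards [hζb.eventually (by simp), eventually_eventually_nhds.2 hζ_eq,
    eventually_eventually_nhds.2 hζb_kkt, hs] with x hcd hx_eq hx_kkt hsx
  have hw_eq : (fun x' => (ζ (b x')).1) =ᶠ[𝓝 x] w := hx_eq.mono fun _ h => congrArg Prod.fst h
  have hfoc_x := (kktMap_eq_iff.1 hx_kkt.self_of_nhds).1
  have henv := hasFDerivAt_envelope (hcd.differentiableAt one_ne_zero).fst
    (hU.differentiable two_ne_zero _) (fun k => (hg k).differentiable two_ne_zero _) hfoc_x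
    (hx_kkt.mono fun _ h => (kktMap_eq_iff.1 h).2)
    (fun k => (differentiableAt_pi.1 (hb.differentiable one_ne_zero x) k).hasFDerivAt)
  rw [show (ζ (b x)).1 = w x from hw_eq.self_of_nhds] at hfoc_x
  exact ⟨contDiffAt_snd.comp x hcd, hsx.1, hfoc_x,
    henv.congr_of_eventuallyEq (hw_eq.fun_comp U).symm⟩

end Multipliers

section StackedConstraints

variable {E κ₁ κ₂ : Type*}

def stackConstraints (G : E → κ₁ → ℝ) (c : E → κ₂ → ℝ) : κ₁ ⊕ κ₂ → E → ℝ :=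
  Sum.elim (fun j w => G w j) (fun m w => c w m)

variable {G : E → κ₁ → ℝ} {c : E → κ₂ → ℝ}

theorem stackConstraints_eq_sumElim_iff {w : E} {x : κ₂ → ℝ} :
    (∀ k, stackConstraints G c k w = Sum.elim (0 : κ₁ → ℝ) x k) ↔ G w = 0 ∧ c w = x := by
  simp [stackConstraints, Sum.forall, funext_iff]

theorem lagrangian_stackConstraints [Fintype κ₁] [Fintype κ₂] (U : E → ℝ) (μ : κ₁ → ℝ)
    (lam : κ₂ → ℝ) :
    lagrangian U (stackConstraints G c) (Sum.elim μ lam) =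
      fun u => U u - ∑ j, μ j * G u j - ∑ m, lam m * c u m := by
  funext u
  simp [lagrangian, stackConstraints, Fintype.sum_sum_type, sub_sub]

variable [NormedAddCommGroup E] [NormedSpace ℝ E]

theorem contDiff_stackConstraints [Fintype κ₁] [Fintype κ₂] {n : WithTop ℕ∞}
    (hG : ContDiff ℝ n G) (hc : ContDiff ℝ n c) (k : κ₁ ⊕ κ₂) :
    ContDiff ℝ n (stackConstraints G c k) := by
  cases k with
  | inl j => exact (contDiff_apply ℝ ℝ j).comp hG
  | inr m => exact (contDiff_apply ℝ ℝ m).comp hc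

theorem fderiv_stackConstraints (w : E) :
    (fun k => fderiv ℝ (stackConstraints G c k) w) =
      Sum.elim (fun j => fderiv ℝ (fun v => G v j) w) (fun m => fderiv ℝ (fun v => c v m) w) := by
  ext (j | m) : 1 <;> rfl

theorem sum_smul_fderiv_stackConstraints [Fintype κ₁] [Fintype κ₂] (s : κ₁ ⊕ κ₂ → ℝ) (w : E) :
    ∑ k, s k • fderiv ℝ (stackConstraints G c k) w =
      ∑ j, s (.inl j) • fderiv ℝ (fun v => G v j) w +
        ∑ m, s (.inr m) • fderiv ℝ (fun v => c v m) w :=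
  Fintype.sum_sum_type _

end StackedConstraints

section ParameterEmbedding

variable {κ₁ κ₂ : Type*} [Fintype κ₁] [Fintype κ₂]

theorem contDiff_sumElim_zero {n : WithTop ℕ∞} :
    ContDiff ℝ n fun x : κ₂ → ℝ => (Sum.elim (0 : κ₁ → ℝ) x : κ₁ ⊕ κ₂ → ℝ) := by
  refine contDiff_pi.2 fun k => ?_
  cases k with
  | inl j => exact contDiff_const
  | inr m => exact contDiff_apply ℝ ℝ m

theorem sum_smul_fderiv_sumElim_zero (a : κ₁ ⊕ κ₂ → ℝ) (y : κ₂ → ℝ) :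
    ∑ k, a k • fderiv ℝ (fun x : κ₂ → ℝ => Sum.elim (0 : κ₁ → ℝ) x k) y =
      ∑ m, a (.inr m) • (ContinuousLinearMap.proj m : (κ₂ → ℝ) →L[ℝ] ℝ) := by
  simp [Fintype.sum_sum_type, (hasFDerivAt_apply _ _).fderiv]

end ParameterEmbedding

theorem stmt_12_general (p J M : ℕ)
    (U : (Fin p → ℝ) → ℝ) (hU : ContDiff ℝ 2 U)
    (G : (Fin p → ℝ) → (Fin J → ℝ)) (hG : ContDiff ℝ 2 G)
    (c : (Fin p → ℝ) → (Fin M → ℝ)) (hc : ContDiff ℝ 2 c)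
    (xstar : Fin M → ℝ)
    (ε : Set (Fin M → ℝ)) (hε : IsOpen ε) (hxε : xstar ∈ ε)
    (wstar : (Fin M → ℝ) → (Fin p → ℝ)) (hw : ContinuousOn wstar ε)
    (hfeas : ∀ x ∈ ε, G (wstar x) = 0 ∧ c (wstar x) = x)
    (hmax : ∀ x ∈ ε, ∀ w : Fin p → ℝ, G w = 0 → c w = x → w ≠ wstar x → U w < U (wstar x))
    (hLICQ : LinearIndependent ℝ (Sum.elim
        (fun j : Fin J => fderiv ℝ (fun w => G w j) (wstar xstar))
        (fun m : Fin M => fderiv ℝ (fun w => c w m) (wstar xstar))))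
    (μ₀ : Fin J → ℝ) (lam₀ : Fin M → ℝ)
    (hFOC₀ : fderiv ℝ U (wstar xstar) =
        ∑ j, μ₀ j • fderiv ℝ (fun w => G w j) (wstar xstar)
          + ∑ m, lam₀ m • fderiv ℝ (fun w => c w m) (wstar xstar))
    (hker : ∀ w : Fin p → ℝ,
        (∀ j, fderiv ℝ (fun v => G v j) (wstar xstar) w = 0) →
        (∀ m, fderiv ℝ (fun v => c v m) (wstar xstar) w = 0) → w ≠ 0 →
        ∃ w' : Fin p → ℝ,
          (∀ j, fderiv ℝ (fun v => G v j) (wstar xstar) w' = 0) ∧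
          (∀ m, fderiv ℝ (fun v => c v m) (wstar xstar) w' = 0) ∧
          fderiv ℝ (fun v => fderiv ℝ
              (fun u => U u - ∑ j, μ₀ j * G u j - ∑ m, lam₀ m * c u m) v w')
            (wstar xstar) w ≠ 0) :
    ∃ ε' : Set (Fin M → ℝ), IsOpen ε' ∧ xstar ∈ ε' ∧ ε' ⊆ ε ∧
      ∃ lam : (Fin M → ℝ) → (Fin M → ℝ), ∃ mu : (Fin M → ℝ) → (Fin J → ℝ),
        ContDiffOn ℝ 1 lam ε' ∧ ContDiffOn ℝ 1 mu ε' ∧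
        (∀ x ∈ ε', fderiv ℝ U (wstar x) =
            ∑ j, mu x j • fderiv ℝ (fun w => G w j) (wstar x)
              + ∑ m, lam x m • fderiv ℝ (fun w => c w m) (wstar x)) ∧
        (∀ x ∈ ε', ∀ (mu' : Fin J → ℝ) (lam' : Fin M → ℝ),
            fderiv ℝ U (wstar x) =
              ∑ j, mu' j • fderiv ℝ (fun w => G w j) (wstar x)
                + ∑ m, lam' m • fderiv ℝ (fun w => c w m) (wstar x) →
            mu' = mu x ∧ lam' = lam x) ∧
        (∀ x ∈ ε', ∀ i j' : Fin M,
            fderiv ℝ (fun y => lam y i) x (Pi.single j' 1) =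
              fderiv ℝ (fun y => lam y j') x (Pi.single i 1)) := by
  have hmax' : ∀ᶠ x in 𝓝 xstar,
      (∀ k, stackConstraints G c k (wstar x) = Sum.elim (0 : Fin J → ℝ) x k) ∧
      IsLocalMaxOn U {v | ∀ k, stackConstraints G c k v = Sum.elim (0 : Fin J → ℝ) x k}
        (wstar x) := by
    filter_upwards [hε.mem_nhds hxε] with x hx
    refine ⟨stackConstraints_eq_sumElim_iff.2 (hfeas x hx), IsMaxOn.localize ?_⟩
    refine isMaxOn_iff.2 fun v hv => ?_
    obtain ⟨hGv, hcv⟩ := stackConstraints_eq_sumElim_iff.1 hv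
    rcases eq_or_ne v (wstar x) with rfl | hne
    exacts [le_rfl, (hmax x hx v hGv hcv hne).le]
  obtain ⟨a, ha⟩ := exists_contDiffAt_multipliers hU (contDiff_stackConstraints hG hc)
    contDiff_sumElim_zero (hw.continuousAt (hε.mem_nhds hxε)) hmax'
    (by rwa [fderiv_stackConstraints]) (a₀ := Sum.elim μ₀ lam₀)
    (by rwa [sum_smul_fderiv_stackConstraints])
    (by rw [LagrangianHessianNondegenerate, lagrangian_stackConstraints]
        simpa [stackConstraints, Sum.forall, and_assoc] using hker)
  obtain ⟨ε', hε'sub, hε'open, hxε'⟩ := mem_nhds_iff.1 (ha.and (hε.mem_nhds hxε))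
  have hlam : ∀ x ∈ ε', ContDiffAt ℝ 1 (fun y m => a y (.inr m)) x := fun x hx =>
    contDiffAt_pi.2 fun m => contDiffAt_pi.1 (hε'sub hx).1.1 (.inr m)
  refine ⟨ε', hε'open, hxε', fun x hx => (hε'sub hx).2, fun x m => a x (.inr m),
    fun x j => a x (.inl j), fun x hx => (hlam x hx).contDiffWithinAt, fun x hx => ?_,
    fun x hx => ?_, fun x hx => ?_, fun x hx => ?_⟩
  · exact (contDiffAt_pi.2 fun j => contDiffAt_pi.1 (hε'sub hx).1.1 (.inl j)).contDiffWithinAt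
  · exact (hε'sub hx).1.2.2.1.trans (sum_smul_fderiv_stackConstraints _ _)
  · intro mu' lam' h
    have hunique := (hε'sub hx).1.2.1.fintypeLinearCombination_injective
      (((sum_smul_fderiv_stackConstraints (Sum.elim mu' lam') _).trans h.symm).trans
        (hε'sub hx).1.2.2.1)
    exact ⟨funext fun j => congrFun hunique (.inl j), funext fun m => congrFun hunique (.inr m)⟩
  · refine fderiv_apply_single_comm (V := fun y => U (wstar y)) ?_
      ((hlam x hx).differentiableAt one_ne_zero)
    filter_upwards [hε'open.mem_nhds hx] with y hy
    exact sum_smul_fderiv_sumElim_zero (a y) y ▸ (hε'sub hy).1.2.2.2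

/-- Proposition 1, symmetry part, abstract form: `w*(x)` is the unique maximizer
of `U` over `{w : G(w) = 0, c(w) = x}` for `x` near `x*`, depending continuously on `x`; the
gradients of the binding constraints at `w*(x*)` are linearly independent (LICQ); multipliers
`μ₀, lam₀` exist at `x*`; and the Hessian of the Lagrangian restricted to the common kernel of the
constraint gradients is invertible (nondegenerate).  Then near `x*` the multipliers `λ(x)` of
the constraints `c(w) = x` are uniquely determined, C¹ in `x`, and the response matrix
`∂λᵢ/∂xⱼ` is symmetric. -/
theorem stmt_12 (p J M : ℕ) (hpJM : J + M ≤ p)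
    (U : (Fin p → ℝ) → ℝ) (hU : ContDiff ℝ 2 U)
    (G : (Fin p → ℝ) → (Fin J → ℝ)) (hG : ContDiff ℝ 2 G)
    (c : (Fin p → ℝ) → (Fin M → ℝ)) (hc : ContDiff ℝ 2 c)
    (xstar : Fin M → ℝ)
    (ε : Set (Fin M → ℝ)) (hε : IsOpen ε) (hxε : xstar ∈ ε)
    (wstar : (Fin M → ℝ) → (Fin p → ℝ)) (hw : ContinuousOn wstar ε)
    (hfeas : ∀ x ∈ ε, G (wstar x) = 0 ∧ c (wstar x) = x)
    (hmax : ∀ x ∈ ε, ∀ w : Fin p → ℝ, G w = 0 → c w = x → w ≠ wstar x → U w < U (wstar x))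
    (hLICQ : LinearIndependent ℝ (Sum.elim
        (fun j : Fin J => fderiv ℝ (fun w => G w j) (wstar xstar))
        (fun m : Fin M => fderiv ℝ (fun w => c w m) (wstar xstar))))
    (μ₀ : Fin J → ℝ) (lam₀ : Fin M → ℝ)
    (hFOC₀ : fderiv ℝ U (wstar xstar) =
        ∑ j, μ₀ j • fderiv ℝ (fun w => G w j) (wstar xstar)
          + ∑ m, lam₀ m • fderiv ℝ (fun w => c w m) (wstar xstar))
    (hker : ∀ w : Fin p → ℝ,
        (∀ j, fderiv ℝ (fun v => G v j) (wstar xstar) w = 0) →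
        (∀ m, fderiv ℝ (fun v => c v m) (wstar xstar) w = 0) → w ≠ 0 →
        ∃ w' : Fin p → ℝ,
          (∀ j, fderiv ℝ (fun v => G v j) (wstar xstar) w' = 0) ∧
          (∀ m, fderiv ℝ (fun v => c v m) (wstar xstar) w' = 0) ∧
          fderiv ℝ (fun v => fderiv ℝ
              (fun u => U u - ∑ j, μ₀ j * G u j - ∑ m, lam₀ m * c u m) v w')
            (wstar xstar) w ≠ 0) :
    ∃ ε' : Set (Fin M → ℝ), IsOpen ε' ∧ xstar ∈ ε' ∧ ε' ⊆ ε ∧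
      ∃ lam : (Fin M → ℝ) → (Fin M → ℝ), ∃ mu : (Fin M → ℝ) → (Fin J → ℝ),
        ContDiffOn ℝ 1 lam ε' ∧ ContDiffOn ℝ 1 mu ε' ∧
        (∀ x ∈ ε', fderiv ℝ U (wstar x) =
            ∑ j, mu x j • fderiv ℝ (fun w => G w j) (wstar x)
              + ∑ m, lam x m • fderiv ℝ (fun w => c w m) (wstar x)) ∧
        (∀ x ∈ ε', ∀ (mu' : Fin J → ℝ) (lam' : Fin M → ℝ),
            fderiv ℝ U (wstar x) =
              ∑ j, mu' j • fderiv ℝ (fun w => G w j) (wstar x)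
                + ∑ m, lam' m • fderiv ℝ (fun w => c w m) (wstar x) →
            mu' = mu x ∧ lam' = lam x) ∧
        (∀ x ∈ ε', ∀ i j' : Fin M,
            fderiv ℝ (fun y => lam y i) x (Pi.single j' 1) =
              fderiv ℝ (fun y => lam y j') x (Pi.single i 1)) :=
  stmt_12_general p J M U hU G hG c hc xstar ε hε hxε wstar hw hfeas hmax hLICQ μ₀ lam₀ hFOC₀ hker
end

section
/- (Section IV example: explicit maximizer and nodal prices) Fix real α > 0 and n > 0, and set c = α. For real x₁, x₂ with |x₁| < n/8 and |x₂| < n/8, consider maximizing f(y₁ᴰ, y₂ᴰ, y₁ˢ, y₂ˢ) = α(1.5n·y₁ᴰ − (y₁ᴰ)²/2) + α(3n·y₂ᴰ − (y₂ᴰ)²/2) − (7cn/4)·y₁ˢ − cn·y₂ˢ over real variables subject to 0 ≤ y₁ᴰ ≤ 1.5n, 0 ≤ y₂ᴰ ≤ 3n, 0 ≤ y₁ˢ ≤ 5n, 0 ≤ y₂ˢ ≤ 5n, x₁ + y₁ˢ = y₁ᴰ, x₂ + y₂ˢ = y₂ᴰ, and y₂ˢ ≤ y₁ˢ + n. Then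 the unique maximizer is y₁ᴰ = 3n/8 + (x₁ − x₂)/2, y₂ᴰ = 11n/8 + (x₂ − x₁)/2, y₁ˢ = 3n/8 − (x₁ + x₂)/2, y₂ˢ = 11n/8 − (x₁ + x₂)/2; at this point the ramping constraint y₂ˢ ≤ y₁ˢ + n is binding, and there exist Karush–Kuhn–Tucker multipliers certifying optimality in which the multipliers of the two balance constraints (the hourly nodal prices) equal λ̄₁ = α(9n/8 + (x₂ − x₁)/2) and λ̄₂ = α(13n/8 + (x₁ − x₂)/2). -/
set_option maxHeartbeats 1600000 in
/-- Section IV example: explicit maximizer and nodal prices: for `α, n > 0`,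
`c = α`, and `|x₁|, |x₂| < n/8`, the constrained maximization of the two-hour market welfare
has the displayed unique maximizer, at which the ramping constraint `y₂ˢ ≤ y₁ˢ + n` is binding,
and KKT multipliers certify optimality with the two balance-constraint multipliers (hourly
nodal prices) equal to `λ̄₁ = α(9n/8 + (x₂ − x₁)/2)` and `λ̄₂ = α(13n/8 + (x₁ − x₂)/2)`. -/
theorem stmt_14 (α n c x₁ x₂ : ℝ) (hα : 0 < α) (hn : 0 < n) (hc : c = α)
    (hx₁ : |x₁| < n / 8) (hx₂ : |x₂| < n / 8) :
    let f : ℝ → ℝ → ℝ → ℝ → ℝ := fun y1D y2D y1S y2S =>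
      α * (1.5 * n * y1D - y1D ^ 2 / 2) + α * (3 * n * y2D - y2D ^ 2 / 2)
        - (7 * c * n / 4) * y1S - c * n * y2S
    let Feas : ℝ → ℝ → ℝ → ℝ → Prop := fun y1D y2D y1S y2S =>
      0 ≤ y1D ∧ y1D ≤ 1.5 * n ∧ 0 ≤ y2D ∧ y2D ≤ 3 * n ∧
      0 ≤ y1S ∧ y1S ≤ 5 * n ∧ 0 ≤ y2S ∧ y2S ≤ 5 * n ∧
      x₁ + y1S = y1D ∧ x₂ + y2S = y2D ∧ y2S ≤ y1S + n
    let y1D₀ : ℝ := 3 * n / 8 + (x₁ - x₂) / 2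
    let y2D₀ : ℝ := 11 * n / 8 + (x₂ - x₁) / 2
    let y1S₀ : ℝ := 3 * n / 8 - (x₁ + x₂) / 2
    let y2S₀ : ℝ := 11 * n / 8 - (x₁ + x₂) / 2
    -- the displayed point is feasible,
    Feas y1D₀ y2D₀ y1S₀ y2S₀ ∧
    -- it is a maximizer,
    (∀ y1D y2D y1S y2S : ℝ, Feas y1D y2D y1S y2S →
        f y1D y2D y1S y2S ≤ f y1D₀ y2D₀ y1S₀ y2S₀) ∧
    -- and it is the unique one;
    (∀ y1D y2D y1S y2S : ℝ, Feas y1D y2D y1S y2S →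
        f y1D y2D y1S y2S = f y1D₀ y2D₀ y1S₀ y2S₀ →
        y1D = y1D₀ ∧ y2D = y2D₀ ∧ y1S = y1S₀ ∧ y2S = y2S₀) ∧
    -- the ramping constraint is binding at this point;
    y2S₀ = y1S₀ + n ∧
    -- KKT multipliers certifying optimality, whose balance-constraint components are the
    -- hourly nodal prices λ̄₁, λ̄₂:
    (∃ lam1 lam2 μ : ℝ, 0 ≤ μ ∧
      -- stationarity in y1D, y2D, y1S, y2S for the Lagrangian
      -- f - lam1 (y1D - y1S - x₁) - lam2 (y2D - y2S - x₂) - μ (y2S - y1S - n):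
      α * (1.5 * n - y1D₀) = lam1 ∧
      α * (3 * n - y2D₀) = lam2 ∧
      -(7 * c * n / 4) = -lam1 - μ ∧
      -(c * n) = -lam2 + μ ∧
      lam1 = α * (9 * n / 8 + (x₂ - x₁) / 2) ∧
      lam2 = α * (13 * n / 8 + (x₁ - x₂) / 2)) := by
  intro f Feas y1D₀ y2D₀ y1S₀ y2S₀
  obtain ⟨h1l, h1r⟩ := abs_lt.mp hx₁
  obtain ⟨h2l, h2r⟩ := abs_lt.mp hx₂
  subst hc
  have hμ : (0:ℝ) ≤ c * (5 * n / 8 + (x₁ - x₂) / 2) := by nlinarith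
  refine ⟨⟨by simp only [y1D₀]; linarith, by simp only [y1D₀]; norm_num; linarith,
    by simp only [y2D₀]; linarith, by simp only [y2D₀]; linarith,
    by simp only [y1S₀]; linarith, by simp only [y1S₀]; linarith,
    by simp only [y2S₀]; linarith, by simp only [y2S₀]; linarith,
    by simp only [y1D₀, y1S₀]; ring, by simp only [y2D₀, y2S₀]; ring,
    by simp only [y1S₀, y2S₀]; linarith⟩, ?_, ?_, by simp only [y1S₀, y2S₀]; ring, ?_⟩
  · intro a b s t hF
    obtain ⟨_, _, _, _, _, _, _, _, hb1, hb2, hramp⟩ := hF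
    have hs : s = a - x₁ := by linarith
    have ht : t = b - x₂ := by linarith
    subst hs ht
    have hslack : (0:ℝ) ≤ a - x₁ + n - (b - x₂) := by linarith
    simp only [f, y1D₀, y2D₀, y1S₀, y2S₀]
    nlinarith [mul_nonneg hα.le (sq_nonneg (a - (3 * n / 8 + (x₁ - x₂) / 2))),
      mul_nonneg hα.le (sq_nonneg (b - (11 * n / 8 + (x₂ - x₁) / 2))),
      mul_nonneg hμ hslack]
  · intro a b s t hF hEq
    obtain ⟨_, _, _, _, _, _, _, _, hb1, hb2, hramp⟩ := hF
    have hs : s = a - x₁ := by linarith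
    have ht : t = b - x₂ := by linarith
    have hslack : (0:ℝ) ≤ a - x₁ + n - (b - x₂) := by linarith
    simp only [f, y1D₀, y2D₀, y1S₀, y2S₀] at hEq ⊢
    subst hs ht
    have key : c * (a - (3 * n / 8 + (x₁ - x₂) / 2)) ^ 2 / 2
        + c * (b - (11 * n / 8 + (x₂ - x₁) / 2)) ^ 2 / 2
        + c * (5 * n / 8 + (x₁ - x₂) / 2) * (a - x₁ + n - (b - x₂)) = 0 := by
      linear_combination -hEq
    have t1 : (0:ℝ) ≤ c * (a - (3 * n / 8 + (x₁ - x₂) / 2)) ^ 2 :=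
      mul_nonneg hα.le (sq_nonneg _)
    have t2 : (0:ℝ) ≤ c * (b - (11 * n / 8 + (x₂ - x₁) / 2)) ^ 2 :=
      mul_nonneg hα.le (sq_nonneg _)
    have t3 : (0:ℝ) ≤ c * (5 * n / 8 + (x₁ - x₂) / 2) * (a - x₁ + n - (b - x₂)) :=
      mul_nonneg hμ hslack
    have e1 : c * (a - (3 * n / 8 + (x₁ - x₂) / 2)) ^ 2 = 0 := by linarith
    have e2 : c * (b - (11 * n / 8 + (x₂ - x₁) / 2)) ^ 2 = 0 := by linarith
    have ha : a - (3 * n / 8 + (x₁ - x₂) / 2) = 0 := by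
      rcases mul_eq_zero.mp e1 with h | h
      · exact absurd h hα.ne'
      · exact pow_eq_zero_iff two_ne_zero |>.mp h
    have hb : b - (11 * n / 8 + (x₂ - x₁) / 2) = 0 := by
      rcases mul_eq_zero.mp e2 with h | h
      · exact absurd h hα.ne'
      · exact pow_eq_zero_iff two_ne_zero |>.mp h
    exact ⟨by linarith, by linarith, by linarith, by linarith⟩
  · refine ⟨c * (9 * n / 8 + (x₂ - x₁) / 2), c * (13 * n / 8 + (x₁ - x₂) / 2),
      c * (5 * n / 8 + (x₁ - x₂) / 2), hμ, ?_, ?_, ?_, ?_, rfl, rfl⟩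
    · simp only [y1D₀]; ring
    · simp only [y2D₀]; ring
    · ring
    · ring
end
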